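/- arXiv:2212.12874 — 5 statements merged into one kernel-verified Lean document; each statement's English description precedes it below -/
import Mathlib

section
/- With the pGMC r²(Y,W|Z) = E[(m(X) - h(Z))²] / E[(Y - h(Z))²], r²(Y,W|Z) = 1 if and only if Y = E[Y|X] almost surely, i.e., Y is a.s. equal to a σ(X)-measurable function. -/
open MeasureTheory Filter

private lemma memℒp_two_condexp {Ω : Type*} {m mΩ : MeasurableSpace Ω} {μ : Measure Ω}
    [IsFiniteMeasure μ] (hm : m ≤ mΩ) {f : Ω → ℝ} (hf : MemLp f 2 μ) :
    MemLp (μ[f|m]) 2 μ := by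
  have hfi : Integrable f μ := hf.integrable (by norm_num)
  set g : Lp ℝ 2 μ := hf.toLp f with hg
  have hcond : ((condExpL2 ℝ ℝ hm g : Lp ℝ 2 μ) : Ω → ℝ) =ᵐ[μ] μ[f|m] := by
    refine ae_eq_condExp_of_forall_setIntegral_eq hm hfi
      (fun s _ hμs => integrableOn_condExpL2_of_measure_ne_top hm hμs.ne g)
      (fun s hs hμs => ?_) (aestronglyMeasurable_condExpL2 hm g)
    rw [integral_condExpL2_eq hm g hs hμs.ne]
    exact setIntegral_congr_ae (hm s hs) ((hf.coeFn_toLp).mono fun x hx _ => hx)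
  exact (Lp.memLp _).ae_eq hcond

private lemma integrable_mul_of_memℒp_two {Ω : Type*} {mΩ : MeasurableSpace Ω} {μ : Measure Ω}
    {f g : Ω → ℝ} (hf : MemLp f 2 μ) (hg : MemLp g 2 μ) :
    Integrable (fun ω => f ω * g ω) μ := by
  refine ((hf.integrable_sq.add hg.integrable_sq).div_const 2).mono'
    (hf.aestronglyMeasurable.mul hg.aestronglyMeasurable) ?_
  filter_upwards with ω
  simp only [norm_mul, Real.norm_eq_abs, Pi.add_apply]
  nlinarith [sq_nonneg (|f ω| - |g ω|), sq_abs (f ω), sq_abs (g ω), abs_mul (f ω) (g ω),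
    abs_nonneg (f ω * g ω)]

/-- r²(Y,W|Z) = 1 iff Y = E[Y|X] almost surely. -/
theorem stmt6 {Ω : Type*} {mΩ : MeasurableSpace Ω} {μ : Measure Ω} [IsProbabilityMeasure μ]
    (mZ mX : MeasurableSpace Ω) (hZX : mZ ≤ mX) (hmX : mX ≤ mΩ)
    (Y : Ω → ℝ) (hY : MemLp Y 2 μ)
    (hden : 0 < ∫ ω, (Y ω - (μ[Y|mZ]) ω) ^ 2 ∂μ) :
    (∫ ω, ((μ[Y|mX]) ω - (μ[Y|mZ]) ω) ^ 2 ∂μ)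
        / (∫ ω, (Y ω - (μ[Y|mZ]) ω) ^ 2 ∂μ) = 1
      ↔ Y =ᵐ[μ] (μ[Y|mX]) := by
  have hmZ : mZ ≤ mΩ := hZX.trans hmX
  set m : Ω → ℝ := μ[Y|mX] with hm_def
  set h : Ω → ℝ := μ[Y|mZ] with hh_def
  have hm2 : MemLp m 2 μ := memℒp_two_condexp hmX hY
  have hh2 : MemLp h 2 μ := memℒp_two_condexp hmZ hY
  have hYi : Integrable Y μ := hY.integrable (by norm_num)
  have hg2 : MemLp (fun ω => m ω - h ω) 2 μ := by
    have := hm2.sub hh2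
    exact this
  have hgmeas : StronglyMeasurable[mX] (fun ω => m ω - h ω) :=
    stronglyMeasurable_condExp.sub (stronglyMeasurable_condExp.mono hZX)
  -- cross term is zero
  have hgY : Integrable (fun ω => (m ω - h ω) * Y ω) μ := integrable_mul_of_memℒp_two hg2 hY
  have hgm : Integrable (fun ω => (m ω - h ω) * m ω) μ := integrable_mul_of_memℒp_two hg2 hm2
  have hpull : (μ[(fun ω => m ω - h ω) * Y|mX]) =ᵐ[μ] (fun ω => m ω - h ω) * m := by
    simpa [hm_def] using condExp_mul_of_stronglyMeasurable_left hgmeas (by exact hgY)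
      hYi
  have h1 : ∫ ω, (m ω - h ω) * Y ω ∂μ = ∫ ω, (m ω - h ω) * m ω ∂μ := by
    have := integral_condExp hmX (μ := μ) (f := (fun ω => m ω - h ω) * Y)
    calc ∫ ω, (m ω - h ω) * Y ω ∂μ
        = ∫ ω, ((fun ω => m ω - h ω) * Y) ω ∂μ := by simp [Pi.mul_apply]
      _ = ∫ ω, (μ[(fun ω => m ω - h ω) * Y|mX]) ω ∂μ := this.symm
      _ = ∫ ω, (m ω - h ω) * m ω ∂μ := integral_congr_ae (hpull.mono fun ω hω => by
            simpa [Pi.mul_apply] using hω)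
  have hcross : ∫ ω, (Y ω - m ω) * (m ω - h ω) ∂μ = 0 := by
    have heq : ∀ ω, (Y ω - m ω) * (m ω - h ω) = (m ω - h ω) * Y ω - (m ω - h ω) * m ω := by
      intro ω; ring
    simp_rw [heq]
    rw [integral_sub hgY hgm, h1, sub_self]
  -- integrability of the squares
  have iA : Integrable (fun ω => (Y ω - m ω) ^ 2) μ := by
    have := (hY.sub hm2).integrable_sq
    simpa [Pi.sub_apply] using this
  have iC : Integrable (fun ω => (m ω - h ω) ^ 2) μ := hg2.integrable_sq
  have iB : Integrable (fun ω => 2 * ((Y ω - m ω) * (m ω - h ω))) μ :=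
    (integrable_mul_of_memℒp_two (by exact hY.sub hm2) hg2).const_mul 2
  -- Pythagoras
  have key : ∫ ω, (Y ω - h ω) ^ 2 ∂μ
      = (∫ ω, (Y ω - m ω) ^ 2 ∂μ) + ∫ ω, (m ω - h ω) ^ 2 ∂μ := by
    have e : ∀ ω, (Y ω - h ω) ^ 2
        = (Y ω - m ω) ^ 2 + 2 * ((Y ω - m ω) * (m ω - h ω)) + (m ω - h ω) ^ 2 := by
      intro ω; ring
    simp_rw [e]
    have iAB : Integrable (fun ω => (Y ω - m ω) ^ 2 + 2 * ((Y ω - m ω) * (m ω - h ω))) μ := by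
      exact iA.add iB
    rw [integral_add iAB iC, integral_add iA iB, integral_const_mul, hcross]
    ring
  set A := ∫ ω, (m ω - h ω) ^ 2 ∂μ
  set B := ∫ ω, (Y ω - h ω) ^ 2 ∂μ
  set C := ∫ ω, (Y ω - m ω) ^ 2 ∂μ
  have hC0 : C = 0 ↔ Y =ᵐ[μ] m := by
    constructor
    · intro hC
      have : (fun ω => (Y ω - m ω) ^ 2) =ᵐ[μ] 0 := by
        rwa [integral_eq_zero_iff_of_nonneg (fun ω => sq_nonneg _) iA] at hC
      filter_upwards [this] with ω hω
      have : (Y ω - m ω) ^ 2 = 0 := hω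
      have := pow_eq_zero_iff (n := 2) (by norm_num) |>.mp this
      linarith
    · intro hYm
      rw [integral_eq_zero_iff_of_nonneg (fun ω => sq_nonneg _) iA]
      filter_upwards [hYm] with ω hω
      simp [hω]
  rw [div_eq_one_iff_eq hden.ne']
  constructor
  · intro hAB
    exact hC0.mp (by linarith [key, hAB])
  · intro hYm
    have : C = 0 := hC0.mpr hYm
    linarith [key]
end

section
/- The pGMC dominates the squared partial correlation: r²(Y,W|Z) ≥ ρ²(Y,W|Z), where ρ(Y,W|Z) is the Pearson correlation between Y - E[Y|Z] and W - E[W|Z] (with W scalar and both residuals having positive variance). In particular ρ(Y,W|Z) ≠ 0 implies r²(Y,W|Z) ≠ 0. -/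
open MeasureTheory Filter

section Aux

variable {α : Type*} {m m0 : MeasurableSpace α} {μ : Measure α}

lemma aux_memℒp_condexp [IsFiniteMeasure μ] (hm : m ≤ m0) {f : α → ℝ}
    (hf : MemLp f 2 μ) : MemLp (μ[f|m]) 2 μ := by
  haveI : SigmaFinite (μ.trim hm) := inferInstance
  have h : ((condExpL2 ℝ ℝ hm (hf.toLp f) : Lp ℝ 2 μ) : α → ℝ) =ᵐ[μ] μ[f|m] := by
    refine ae_eq_condExp_of_forall_setIntegral_eq hm (hf.integrable one_le_two)
      (fun s hs hμs => integrableOn_Lp_of_measure_ne_top _ fact_one_le_two_ennreal.elim hμs.ne)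
      (fun s hs hμs => ?_) (aestronglyMeasurable_condExpL2 hm _)
    rw [integral_condExpL2_eq hm (hf.toLp f) hs hμs.ne]
    exact setIntegral_congr_ae (hm s hs) (hf.coeFn_toLp.mono fun x hx _ => hx)
  exact (Lp.memLp _).ae_eq h

lemma aux_int_mul {f g : α → ℝ} (hf : MemLp f 2 μ) (hg : MemLp g 2 μ) :
    Integrable (fun x => f x * g x) μ := by
  have h : MemLp (f • g) 1 μ := hg.smul hf (hpqr := ⟨by
    simp only [one_div, inv_one]
    exact ENNReal.inv_two_add_inv_two⟩)
  exact memLp_one_iff_integrable.mp h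

lemma aux_cs {f g : α → ℝ} (hf : MemLp f 2 μ) (hg : MemLp g 2 μ) :
    (∫ x, f x * g x ∂μ) ^ 2 ≤ (∫ x, f x ^ 2 ∂μ) * (∫ x, g x ^ 2 ∂μ) := by
  set F := hf.toLp f
  set G := hg.toLp g
  have hFG : (∫ x, f x * g x ∂μ) = (inner ℝ F G : ℝ) := by
    rw [L2.inner_def]
    refine integral_congr_ae ?_
    filter_upwards [hf.coeFn_toLp, hg.coeFn_toLp] with x hx hy
    simp [F, G, hx, hy, RCLike.inner_apply, mul_comm]
  have hFF : (∫ x, f x ^ 2 ∂μ) = (inner ℝ F F : ℝ) := by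
    rw [L2.inner_def]
    refine integral_congr_ae ?_
    filter_upwards [hf.coeFn_toLp] with x hx
    simp [F, hx, RCLike.inner_apply, sq]
  have hGG : (∫ x, g x ^ 2 ∂μ) = (inner ℝ G G : ℝ) := by
    rw [L2.inner_def]
    refine integral_congr_ae ?_
    filter_upwards [hg.coeFn_toLp] with x hx
    simp [G, hx, RCLike.inner_apply, sq]
  rw [hFG, hFF, hGG, sq]
  exact real_inner_mul_inner_self_le F G

end Aux

/-- r²(Y,W|Z) ≥ ρ²(Y,W|Z), where ρ is the Pearson correlation of the
residuals Y - E[Y|Z] and W - E[W|Z] (W scalar, σ(X)-measurable, both residuals with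
positive variance). In particular ρ ≠ 0 implies r² ≠ 0. -/
theorem stmt7 {Ω : Type*} {mΩ : MeasurableSpace Ω} {μ : Measure Ω} [IsProbabilityMeasure μ]
    (mZ mX : MeasurableSpace Ω) (hZX : mZ ≤ mX) (hmX : mX ≤ mΩ)
    (Y W : Ω → ℝ) (hY : MemLp Y 2 μ) (hW : MemLp W 2 μ)
    (hWmeas : StronglyMeasurable[mX] W)
    (hYres : 0 < ∫ ω, (Y ω - (μ[Y|mZ]) ω) ^ 2 ∂μ)
    (hWres : 0 < ∫ ω, (W ω - (μ[W|mZ]) ω) ^ 2 ∂μ)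
    (ρ : ℝ)
    (hρ : ρ = (∫ ω, (Y ω - (μ[Y|mZ]) ω) * (W ω - (μ[W|mZ]) ω) ∂μ)
        / (Real.sqrt (∫ ω, (Y ω - (μ[Y|mZ]) ω) ^ 2 ∂μ)
            * Real.sqrt (∫ ω, (W ω - (μ[W|mZ]) ω) ^ 2 ∂μ)))
    (r2 : ℝ)
    (hr2 : r2 = (∫ ω, ((μ[Y|mX]) ω - (μ[Y|mZ]) ω) ^ 2 ∂μ)
        / (∫ ω, (Y ω - (μ[Y|mZ]) ω) ^ 2 ∂μ)) :
    r2 ≥ ρ ^ 2 ∧ (ρ ≠ 0 → r2 ≠ 0) := by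
  have hmZ : mZ ≤ mΩ := hZX.trans hmX
  haveI : SigmaFinite (μ.trim hmZ) := inferInstance
  haveI : SigmaFinite (μ.trim hmX) := inferInstance
  have hYZ := aux_memℒp_condexp hmZ hY
  have hYX := aux_memℒp_condexp hmX hY
  have hWZ := aux_memℒp_condexp hmZ hW
  have hYr : MemLp (fun ω => Y ω - (μ[Y|mZ]) ω) 2 μ := hY.sub hYZ
  have hWr : MemLp (fun ω => W ω - (μ[W|mZ]) ω) 2 μ := hW.sub hWZ
  have hfm : MemLp (fun ω => (μ[Y|mX]) ω - (μ[Y|mZ]) ω) 2 μ := hYX.sub hYZ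
  have hh : MemLp (fun ω => Y ω - (μ[Y|mX]) ω) 2 μ := hY.sub hYX
  set A := ∫ ω, (Y ω - (μ[Y|mZ]) ω) ^ 2 ∂μ with hA
  set B := ∫ ω, (W ω - (μ[W|mZ]) ω) ^ 2 ∂μ with hB
  set C := ∫ ω, ((μ[Y|mX]) ω - (μ[Y|mZ]) ω) ^ 2 ∂μ with hC
  set N := ∫ ω, (Y ω - (μ[Y|mZ]) ω) * (W ω - (μ[W|mZ]) ω) ∂μ with hN
  have hWrmeas : StronglyMeasurable[mX] (fun ω => W ω - (μ[W|mZ]) ω) :=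
    hWmeas.sub (stronglyMeasurable_condExp.mono hZX)
  have hcond0 : μ[fun ω => Y ω - (μ[Y|mX]) ω|mX] =ᵐ[μ] 0 := by
    have h1 : (fun ω => Y ω - (μ[Y|mX]) ω) = Y - μ[Y|mX] := rfl
    rw [h1]
    refine (condExp_sub (hY.integrable one_le_two) integrable_condExp mX).trans ?_
    rw [condExp_of_stronglyMeasurable hmX stronglyMeasurable_condExp integrable_condExp]
    simp
  have hint_hWr : Integrable ((fun ω => W ω - (μ[W|mZ]) ω) * fun ω => Y ω - (μ[Y|mX]) ω) μ :=
    aux_int_mul hWr hh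
  have hze : μ[(fun ω => W ω - (μ[W|mZ]) ω) * fun ω => Y ω - (μ[Y|mX]) ω|mX] =ᵐ[μ] 0 := by
    refine (condExp_mul_of_stronglyMeasurable_left hWrmeas hint_hWr (hh.integrable one_le_two)).trans ?_
    filter_upwards [hcond0] with ω h0
    simp [h0]
  have horth : ∫ ω, (W ω - (μ[W|mZ]) ω) * (Y ω - (μ[Y|mX]) ω) ∂μ = 0 := by
    have h1 : ∫ ω, (W ω - (μ[W|mZ]) ω) * (Y ω - (μ[Y|mX]) ω) ∂μ
        = ∫ ω, (μ[(fun ω => W ω - (μ[W|mZ]) ω) * fun ω => Y ω - (μ[Y|mX]) ω|mX]) ω ∂μ :=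
      (integral_condExp hmX).symm
    rw [h1, integral_congr_ae hze]
    simp
  have hNsplit : N = ∫ ω, ((μ[Y|mX]) ω - (μ[Y|mZ]) ω) * (W ω - (μ[W|mZ]) ω) ∂μ := by
    have hpt : ∀ ω, (Y ω - (μ[Y|mZ]) ω) * (W ω - (μ[W|mZ]) ω)
        = ((μ[Y|mX]) ω - (μ[Y|mZ]) ω) * (W ω - (μ[W|mZ]) ω)
          + (W ω - (μ[W|mZ]) ω) * (Y ω - (μ[Y|mX]) ω) := fun ω => by ring
    have hint2 : Integrable (fun ω => (W ω - (μ[W|mZ]) ω) * (Y ω - (μ[Y|mX]) ω)) μ := hint_hWr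
    rw [hN]
    simp_rw [hpt]
    rw [integral_add (aux_int_mul hfm hWr) hint2, horth, add_zero]
  have hCS : N ^ 2 ≤ C * B := by
    rw [hNsplit]
    exact aux_cs hfm hWr
  have hC0 : (0:ℝ) ≤ C := by
    rw [hC]; exact integral_nonneg fun ω => sq_nonneg _
  have hρ2 : ρ ^ 2 = N ^ 2 / (A * B) := by
    rw [hρ, div_pow, mul_pow, Real.sq_sqrt hYres.le, Real.sq_sqrt hWres.le]
  have hmain : ρ ^ 2 ≤ r2 := by
    rw [hρ2, hr2, div_le_div_iff₀ (by positivity) hYres]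
    nlinarith [hCS, hYres, hWres]
  refine ⟨hmain, fun hρne => ?_⟩
  have hsq : 0 < ρ ^ 2 := by positivity
  exact (lt_of_lt_of_le hsq hmain).ne'
end

section
/- The pGMC can be expressed via GMC: r²(Y,W|Z) = (GMC(Y|X) - GMC(Y|Z)) / (1 - GMC(Y|Z)), where GMC(Y|V) = Var(E[Y|V])/Var(Y), provided Var(Y) > 0 and GMC(Y|Z) < 1. -/
open MeasureTheory ProbabilityTheory Filter

section Aux

variable {Ω : Type*} {mΩ : MeasurableSpace Ω} {μ : Measure Ω}

lemma aux_integrable_mul [IsProbabilityMeasure μ] {f g : Ω → ℝ}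
    (hf : MemLp f 2 μ) (hg : MemLp g 2 μ) :
    Integrable (fun ω => f ω * g ω) μ := by
  refine Integrable.mono' ((hf.integrable_sq.add hg.integrable_sq).div_const 2)
    (hf.aestronglyMeasurable.mul hg.aestronglyMeasurable) ?_
  filter_upwards with ω
  simp only [Pi.add_apply, Pi.div_apply, Real.norm_eq_abs]
  nlinarith [sq_nonneg (|f ω| - |g ω|), abs_mul (f ω) (g ω), sq_abs (f ω), sq_abs (g ω),
    abs_nonneg (f ω * g ω), neg_abs_le (f ω * g ω)]

lemma aux_variance_congr {f g : Ω → ℝ} (h : f =ᵐ[μ] g) :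
    variance f μ = variance g μ := by
  rw [variance, variance, evariance, evariance, integral_congr_ae h]
  congr 1
  refine lintegral_congr_ae (h.mono fun ω hω => ?_)
  simp only [hω]

lemma aux_memℒp_condexp_s9 [IsProbabilityMeasure μ] {m : MeasurableSpace Ω} (hm : m ≤ mΩ)
    {f : Ω → ℝ} (hf : MemLp f 2 μ) : MemLp (μ[f|m]) 2 μ := by
  haveI : SigmaFinite (μ.trim hm) := inferInstance
  have heq : ((condExpL2 ℝ ℝ hm (hf.toLp f) : Ω →₂[μ] ℝ) : Ω → ℝ) =ᵐ[μ] μ[f|m] := by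
    refine ae_eq_condExp_of_forall_setIntegral_eq hm (hf.integrable one_le_two) ?_ ?_ ?_
    · intro s _ hμs
      exact integrableOn_condExpL2_of_measure_ne_top hm hμs.ne _
    · intro s hs hμs
      rw [integral_condExpL2_eq hm (hf.toLp f) hs hμs.ne]
      exact @setIntegral_congr_ae Ω ℝ mΩ _ _ _ _ s μ (hm s hs)
        (hf.coeFn_toLp.mono fun x hx _ => hx)
    · exact aestronglyMeasurable_condExpL2 hm _
  exact (Lp.memLp _).ae_eq heq

lemma aux_integral_sq_sub_condexp [IsProbabilityMeasure μ] {m : MeasurableSpace Ω}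
    (hm : m ≤ mΩ) {f : Ω → ℝ} (hf : MemLp f 2 μ) :
    ∫ ω, (f ω - (μ[f|m]) ω) ^ 2 ∂μ = variance f μ - variance (μ[f|m]) μ := by
  haveI : SigmaFinite (μ.trim hm) := inferInstance
  set g := μ[f|m] with hgdef
  have hg : MemLp g 2 μ := aux_memℒp_condexp_s9 hm hf
  have hfg : Integrable (fun ω => g ω * f ω) μ := aux_integrable_mul hg hf
  have hcross : ∫ ω, g ω * f ω ∂μ = ∫ ω, g ω * g ω ∂μ := by
    have h1 : μ[g * f|m] =ᵐ[μ] g * μ[f|m] :=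
      condExp_mul_of_stronglyMeasurable_left stronglyMeasurable_condExp
        (by exact hfg) (hf.integrable one_le_two)
    calc ∫ ω, g ω * f ω ∂μ = ∫ ω, (g * f) ω ∂μ := by simp [Pi.mul_apply]
      _ = ∫ ω, (μ[g * f|m]) ω ∂μ := (integral_condExp hm).symm
      _ = ∫ ω, (g * μ[f|m]) ω ∂μ := integral_congr_ae h1
      _ = ∫ ω, g ω * g ω ∂μ := by simp [Pi.mul_apply, hgdef]
  have hmean : ∫ ω, g ω ∂μ = ∫ ω, f ω ∂μ := integral_condExp hm
  have hexp : ∫ ω, (f ω - g ω) ^ 2 ∂μ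
      = (∫ ω, f ω ^ 2 ∂μ) - 2 * (∫ ω, g ω * f ω ∂μ) + ∫ ω, g ω ^ 2 ∂μ := by
    have h1 : (fun ω => (f ω - g ω) ^ 2)
        = fun ω => f ω ^ 2 - 2 * (g ω * f ω) + g ω ^ 2 := by
      funext ω; ring
    have hint1 : Integrable (fun ω => f ω ^ 2 - 2 * (g ω * f ω)) μ :=
      hf.integrable_sq.sub (hfg.const_mul 2)
    rw [h1, integral_add hint1 hg.integrable_sq,
      integral_sub hf.integrable_sq (hfg.const_mul 2), integral_const_mul]
  have hsq : ∫ ω, g ω * g ω ∂μ = ∫ ω, g ω ^ 2 ∂μ := by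
    congr 1; funext ω; ring
  have hvf : variance f μ = (∫ ω, f ω ^ 2 ∂μ) - (∫ ω, f ω ∂μ) ^ 2 := by
    rw [variance_eq_sub hf]; simp [sq]
  have hvg : variance g μ = (∫ ω, g ω ^ 2 ∂μ) - (∫ ω, g ω ∂μ) ^ 2 := by
    rw [variance_eq_sub hg]; simp [sq]
  rw [hexp, hcross, hsq, hvf, hvg, hmean]
  ring

end Aux

/-- r²(Y,W|Z) = (GMC(Y|X) - GMC(Y|Z)) / (1 - GMC(Y|Z)), where
GMC(Y|V) = Var(E[Y|V])/Var(Y), provided Var(Y) > 0 and GMC(Y|Z) < 1. -/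
theorem stmt9 {Ω : Type*} {mΩ : MeasurableSpace Ω} {μ : Measure Ω} [IsProbabilityMeasure μ]
    (mZ mX : MeasurableSpace Ω) (hZX : mZ ≤ mX) (hmX : mX ≤ mΩ)
    (Y : Ω → ℝ) (hY : MemLp Y 2 μ)
    (hVar : 0 < variance Y μ)
    (hGMCZ : variance (μ[Y|mZ]) μ / variance Y μ < 1) :
    (∫ ω, ((μ[Y|mX]) ω - (μ[Y|mZ]) ω) ^ 2 ∂μ)
        / (∫ ω, (Y ω - (μ[Y|mZ]) ω) ^ 2 ∂μ)
      = (variance (μ[Y|mX]) μ / variance Y μ - variance (μ[Y|mZ]) μ / variance Y μ)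
          / (1 - variance (μ[Y|mZ]) μ / variance Y μ) := by
  have hmZ : mZ ≤ mΩ := hZX.trans hmX
  haveI : SigmaFinite (μ.trim hmZ) := inferInstance
  haveI : SigmaFinite (μ.trim hmX) := inferInstance
  set CX := μ[Y|mX] with hCXdef
  set CZ := μ[Y|mZ] with hCZdef
  have hCX : MemLp CX 2 μ := aux_memℒp_condexp_s9 hmX hY
  have htower : μ[CX|mZ] =ᵐ[μ] CZ := condExp_condExp_of_le hZX hmX
  -- numerator
  have hnum : ∫ ω, (CX ω - CZ ω) ^ 2 ∂μ = variance CX μ - variance CZ μ := by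
    have h1 : ∫ ω, (CX ω - CZ ω) ^ 2 ∂μ = ∫ ω, (CX ω - (μ[CX|mZ]) ω) ^ 2 ∂μ := by
      refine integral_congr_ae (htower.mono fun ω hω => ?_)
      dsimp only
      rw [hω]
    rw [h1, aux_integral_sq_sub_condexp hmZ hCX, aux_variance_congr htower]
  -- denominator
  have hden : ∫ ω, (Y ω - CZ ω) ^ 2 ∂μ = variance Y μ - variance CZ μ :=
    aux_integral_sq_sub_condexp hmZ hY
  rw [hnum, hden]
  have hV : variance Y μ ≠ 0 := hVar.ne'
  have hlt : variance CZ μ < variance Y μ := (div_lt_one hVar).mp hGMCZ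
  have hne : variance Y μ - variance CZ μ ≠ 0 := sub_ne_zero.mpr hlt.ne'
  field_simp
end

section
/- Monotonicity of pGMC in the conditioning set: if Z_s is a sub-vector of Z (so σ(Z_s) ⊆ σ(Z) ⊆ σ(X)), and W_s is the complementary sub-vector with X = (Z_s, W_s), then GMC(Y|X) ≥ r²(Y, W_s | Z_s) ≥ r²(Y, W | Z). -/
open MeasureTheory ProbabilityTheory Filter

section Aux

variable {Ω : Type*} {mΩ : MeasurableSpace Ω} {μ : Measure Ω} [IsProbabilityMeasure μ]

lemma memLp_two_condexp {m : MeasurableSpace Ω} (hm : m ≤ mΩ) {Y : Ω → ℝ}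
    (hY : MemLp Y 2 μ) : MemLp (μ[Y|m]) 2 μ := by
  set g : Ω →₂[μ] ℝ := (condExpL2 ℝ ℝ hm (hY.toLp Y) : Lp ℝ 2 μ) with hg
  have hEq : (g : Ω → ℝ) =ᵐ[μ] μ[Y|m] := by
    refine ae_eq_condExp_of_forall_setIntegral_eq hm (hY.integrable one_le_two) ?_ ?_ ?_
    · intro s hs hμs
      exact @integrableOn_Lp_of_measure_ne_top Ω mΩ μ ℝ _ 2 s g one_le_two hμs.ne
    · intro s hs hμs
      rw [hg, integral_condExpL2_eq (𝕜 := ℝ) (μ := μ) (m0 := mΩ) hm (hY.toLp Y) hs hμs.ne]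
      exact integral_congr_ae (ae_restrict_of_ae hY.coeFn_toLp)
    · exact lpMeas.aestronglyMeasurable _
  exact (Lp.memLp g).ae_eq hEq

lemma integrable_mul_of_memLp_two {f g : Ω → ℝ} (hf : MemLp f 2 μ) (hg : MemLp g 2 μ) :
    Integrable (fun ω => f ω * g ω) μ := by
  have h : MemLp (f • g) 1 μ :=
    hg.smul hf
  rw [memLp_one_iff_integrable] at h
  exact h

lemma integral_mul_sub_condexp {m : MeasurableSpace Ω} (hm : m ≤ mΩ) {Y g : Ω → ℝ}
    (hY : MemLp Y 2 μ) (hgm : StronglyMeasurable[m] g) (hg : MemLp g 2 μ) :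
    ∫ ω, g ω * (Y ω - (μ[Y|m]) ω) ∂μ = 0 := by
  have hA : MemLp (μ[Y|m]) 2 μ := memLp_two_condexp hm hY
  have hYA : MemLp (Y - μ[Y|m]) 2 μ := hY.sub hA
  have hint : Integrable (Y - μ[Y|m]) μ := hYA.integrable one_le_two
  have hprod : Integrable (g * (Y - μ[Y|m])) μ := by
    have := integrable_mul_of_memLp_two hg hYA
    exact this
  have h1 : μ[g * (Y - μ[Y|m])|m] =ᵐ[μ] g * μ[(Y - μ[Y|m])|m] :=
    condExp_mul_of_stronglyMeasurable_left hgm hprod hint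
  have h2 : μ[(Y - μ[Y|m])|m] =ᵐ[μ] 0 := by
    refine (condExp_sub (hY.integrable one_le_two) integrable_condExp m).trans ?_
    rw [condExp_of_stronglyMeasurable hm stronglyMeasurable_condExp integrable_condExp]
    filter_upwards with ω
    simp
  have : ∫ ω, (g * (Y - μ[Y|m])) ω ∂μ = 0 := by
    rw [← integral_condExp hm]
    rw [integral_congr_ae (h1.trans ?_), integral_zero]
    filter_upwards [h2] with ω hω
    simp [hω]
  simpa [Pi.mul_apply, Pi.sub_apply] using this

lemma pyth {m' : MeasurableSpace Ω} (hm' : m' ≤ mΩ) {f g : Ω → ℝ}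
    (hf : MemLp f 2 μ) (hgm : StronglyMeasurable[m'] g) (hg : MemLp g 2 μ) :
    ∫ ω, (f ω - g ω) ^ 2 ∂μ
      = (∫ ω, (f ω - (μ[f|m']) ω) ^ 2 ∂μ) + ∫ ω, ((μ[f|m']) ω - g ω) ^ 2 ∂μ := by
  set A := μ[f|m'] with hA'
  have hA : MemLp A 2 μ := memLp_two_condexp hm' hf
  have hAgm : StronglyMeasurable[m'] (fun ω => A ω - g ω) :=
    stronglyMeasurable_condExp.sub hgm
  have horto : ∫ ω, (A ω - g ω) * (f ω - A ω) ∂μ = 0 :=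
    integral_mul_sub_condexp hm' hf hAgm (hA.sub hg)
  have h1 : Integrable (fun ω => (f ω - A ω) ^ 2) μ := by
    simpa using (hf.sub hA).integrable_sq
  have h2 : Integrable (fun ω => (A ω - g ω) ^ 2) μ := by
    simpa using (hA.sub hg).integrable_sq
  have h3 : Integrable (fun ω => (A ω - g ω) * (f ω - A ω)) μ :=
    integrable_mul_of_memLp_two (hA.sub hg) (hf.sub hA)
  have key : (fun ω => (f ω - g ω) ^ 2)
      = fun ω => ((f ω - A ω) ^ 2 + (A ω - g ω) ^ 2) + 2 * ((A ω - g ω) * (f ω - A ω)) := by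
    funext ω; ring
  rw [key,
    integral_add (f := fun ω => (f ω - A ω) ^ 2 + (A ω - g ω) ^ 2)
      (g := fun ω => 2 * ((A ω - g ω) * (f ω - A ω))) (h1.add h2) (h3.const_mul 2),
    integral_add h1 h2, integral_const_mul, horto]
  ring

end Aux

/-- Monotonicity of the pGMC: if σ(Z_s) ⊆ σ(Z) ⊆ σ(X), then
GMC(Y|X) ≥ r²(Y, W_s|Z_s) ≥ r²(Y, W|Z). -/
theorem stmt12 {Ω : Type*} {mΩ : MeasurableSpace Ω} {μ : Measure Ω} [IsProbabilityMeasure μ]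
    (mZs mZ mX : MeasurableSpace Ω) (hZsZ : mZs ≤ mZ) (hZX : mZ ≤ mX) (hmX : mX ≤ mΩ)
    (Y : Ω → ℝ) (hY : MemLp Y 2 μ)
    (hVar : 0 < variance Y μ)
    (hdenZ : 0 < ∫ ω, (Y ω - (μ[Y|mZ]) ω) ^ 2 ∂μ)
    (hdenZs : 0 < ∫ ω, (Y ω - (μ[Y|mZs]) ω) ^ 2 ∂μ) :
    variance (μ[Y|mX]) μ / variance Y μ
        ≥ (∫ ω, ((μ[Y|mX]) ω - (μ[Y|mZs]) ω) ^ 2 ∂μ)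
            / (∫ ω, (Y ω - (μ[Y|mZs]) ω) ^ 2 ∂μ) ∧
    (∫ ω, ((μ[Y|mX]) ω - (μ[Y|mZs]) ω) ^ 2 ∂μ)
        / (∫ ω, (Y ω - (μ[Y|mZs]) ω) ^ 2 ∂μ)
      ≥ (∫ ω, ((μ[Y|mX]) ω - (μ[Y|mZ]) ω) ^ 2 ∂μ)
          / (∫ ω, (Y ω - (μ[Y|mZ]) ω) ^ 2 ∂μ) := by
  have hmZ : mZ ≤ mΩ := hZX.trans hmX
  have hmZs : mZs ≤ mΩ := hZsZ.trans hmZ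
  set A := μ[Y|mX] with hAdef
  set B := μ[Y|mZ] with hBdef
  set C := μ[Y|mZs] with hCdef
  have hA : MemLp A 2 μ := memLp_two_condexp hmX hY
  have hB : MemLp B 2 μ := memLp_two_condexp hmZ hY
  have hC : MemLp C 2 μ := memLp_two_condexp hmZs hY
  have sBX : StronglyMeasurable[mX] B := stronglyMeasurable_condExp.mono hZX
  have sCX : StronglyMeasurable[mX] C := stronglyMeasurable_condExp.mono (hZsZ.trans hZX)
  have sCZ : StronglyMeasurable[mZ] C := stronglyMeasurable_condExp.mono hZsZ
  have F1 : ∫ ω, (Y ω - C ω) ^ 2 ∂μ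
      = (∫ ω, (Y ω - A ω) ^ 2 ∂μ) + ∫ ω, (A ω - C ω) ^ 2 ∂μ := pyth hmX hY sCX hC
  have F6 : ∫ ω, (Y ω - B ω) ^ 2 ∂μ
      = (∫ ω, (Y ω - A ω) ^ 2 ∂μ) + ∫ ω, (A ω - B ω) ^ 2 ∂μ := pyth hmX hY sBX hB
  have F2 : ∫ ω, (Y ω - C ω) ^ 2 ∂μ
      = (∫ ω, (Y ω - B ω) ^ 2 ∂μ) + ∫ ω, (B ω - C ω) ^ 2 ∂μ := pyth hmZ hY sCZ hC
  have hAB : μ[A|mZ] =ᵐ[μ] B := condExp_condExp_of_le hZX hmX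
  have hAC : μ[A|mZs] =ᵐ[μ] C := condExp_condExp_of_le (hZsZ.trans hZX) hmX
  have F3 : ∫ ω, (A ω - C ω) ^ 2 ∂μ
      = (∫ ω, (A ω - B ω) ^ 2 ∂μ) + ∫ ω, (B ω - C ω) ^ 2 ∂μ := by
    have h := pyth hmZ hA sCZ hC
    have e1 : ∫ ω, (A ω - (μ[A|mZ]) ω) ^ 2 ∂μ = ∫ ω, (A ω - B ω) ^ 2 ∂μ :=
      integral_congr_ae (by filter_upwards [hAB] with ω hω; rw [hω])
    have e2 : ∫ ω, ((μ[A|mZ]) ω - C ω) ^ 2 ∂μ = ∫ ω, (B ω - C ω) ^ 2 ∂μ :=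
      integral_congr_ae (by filter_upwards [hAB] with ω hω; rw [hω])
    rw [e1, e2] at h
    exact h
  have hIntY : Integrable Y μ := hY.integrable one_le_two
  have hmean : ∫ ω, A ω ∂μ = ∫ ω, Y ω ∂μ := integral_condExp hmX
  have hVarY : variance Y μ = ∫ ω, (Y ω - ∫ x, Y x ∂μ) ^ 2 ∂μ := by
    rw [variance_eq_integral hY.aemeasurable]
  have hVarA : variance A μ = ∫ ω, (A ω - ∫ x, Y x ∂μ) ^ 2 ∂μ := by
    rw [variance_eq_integral hA.aemeasurable, hmean]
  have F4 : variance Y μ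
      = (∫ ω, (Y ω - C ω) ^ 2 ∂μ) + ∫ ω, (C ω - ∫ x, Y x ∂μ) ^ 2 ∂μ := by
    rw [hVarY]
    exact pyth hmZs hY stronglyMeasurable_const (memLp_const _)
  have F5 : variance A μ
      = (∫ ω, (A ω - C ω) ^ 2 ∂μ) + ∫ ω, (C ω - ∫ x, Y x ∂μ) ^ 2 ∂μ := by
    rw [hVarA]
    have h := pyth hmZs hA stronglyMeasurable_const (memLp_const (∫ x, Y x ∂μ))
    have e1 : ∫ ω, (A ω - (μ[A|mZs]) ω) ^ 2 ∂μ = ∫ ω, (A ω - C ω) ^ 2 ∂μ :=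
      integral_congr_ae (by filter_upwards [hAC] with ω hω; rw [hω])
    have e2 : ∫ ω, ((μ[A|mZs]) ω - ∫ x, Y x ∂μ) ^ 2 ∂μ
        = ∫ ω, (C ω - ∫ x, Y x ∂μ) ^ 2 ∂μ :=
      integral_congr_ae (by filter_upwards [hAC] with ω hω; rw [hω])
    rw [e1, e2] at h
    exact h
  have nu : 0 ≤ ∫ ω, (Y ω - A ω) ^ 2 ∂μ := integral_nonneg fun ω => sq_nonneg _
  have na : 0 ≤ ∫ ω, (A ω - C ω) ^ 2 ∂μ := integral_nonneg fun ω => sq_nonneg _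
  have na' : 0 ≤ ∫ ω, (A ω - B ω) ^ 2 ∂μ := integral_nonneg fun ω => sq_nonneg _
  have ns : 0 ≤ ∫ ω, (B ω - C ω) ^ 2 ∂μ := integral_nonneg fun ω => sq_nonneg _
  have nt : 0 ≤ ∫ ω, (C ω - ∫ x, Y x ∂μ) ^ 2 ∂μ := integral_nonneg fun ω => sq_nonneg _
  constructor
  · rw [ge_iff_le, div_le_div_iff₀ hdenZs hVar]
    nlinarith [F1, F4, F5, nu, na, nt]
  · rw [ge_iff_le, div_le_div_iff₀ hdenZ hdenZs]
    nlinarith [F2, F3, F6, nu, na', ns]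
end

section
/- Let W, Z be independent standard normal random variables and Y = Z + W². Then the partial correlation ρ(Y,W|Z) = 0 while the pGMC satisfies r²(Y,W|Z) = 1. -/
open MeasureTheory ProbabilityTheory Filter


lemma gauss_pow_integrable (k : ℕ) :
    Integrable (fun x : ℝ => x ^ k) (gaussianReal 0 1) := by
  rw [gaussianReal_of_var_ne_zero 0 one_ne_zero]
  rw [integrable_withDensity_iff (measurable_gaussianPDF 0 1)
    (Filter.Eventually.of_forall fun x => ENNReal.ofReal_lt_top)]
  have h : Integrable (fun x : ℝ => x ^ (k : ℝ) * Real.exp (-(2:ℝ)⁻¹ * x ^ 2)) volume :=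
    integrable_rpow_mul_exp_neg_mul_sq (by norm_num)
      (lt_of_lt_of_le (by norm_num) (Nat.cast_nonneg k))
  simp_rw [Real.rpow_natCast] at h
  have h2 := h.const_mul ((Real.sqrt (2 * Real.pi))⁻¹)
  refine h2.congr ?_
  filter_upwards with x
  rw [gaussianPDF, ENNReal.toReal_ofReal (gaussianPDFReal_nonneg _ _ _), gaussianPDFReal]
  push_cast
  ring_nf

lemma gauss_map_neg : (gaussianReal 0 1).map (fun x => -x) = gaussianReal 0 1 := by
  have h := gaussianReal_map_const_mul (μ := 0) (v := 1) (-1)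
  simp only [neg_mul, one_mul, mul_zero, neg_zero] at h
  convert h using 2
  norm_num

lemma gauss_odd_moment (k : ℕ) (hk : Odd k) :
    ∫ x, x ^ k ∂(gaussianReal 0 1) = 0 := by
  have h : ∫ x, x ^ k ∂(gaussianReal 0 1)
      = ∫ x, (-x) ^ k ∂(gaussianReal 0 1) := by
    conv_lhs => rw [← gauss_map_neg]
    have hsm : AEStronglyMeasurable (fun x : ℝ => x ^ k)
        ((gaussianReal 0 1).map (fun x => -x)) :=
      (measurable_id.pow_const k).aestronglyMeasurable
    rw [integral_map measurable_neg.aemeasurable hsm]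
  have h2 : ∫ x, (-x) ^ k ∂(gaussianReal 0 1)
      = - ∫ x, x ^ k ∂(gaussianReal 0 1) := by
    rw [← integral_neg]
    congr 1 with x
    rw [hk.neg_pow]
  linarith [h, h2]

lemma gauss_sq_eq_null (c : ℝ) : gaussianReal 0 1 {x : ℝ | x ^ 2 = c} = 0 := by
  refine gaussianReal_absolutelyContinuous 0 one_ne_zero ?_
  refine measure_mono_null (fun x hx => ?_)
    ((Set.toFinite ({Real.sqrt c, -Real.sqrt c} : Set ℝ)).measure_zero volume)
  have h : |x| = Real.sqrt c := by
    rw [← hx, Real.sqrt_sq_eq_abs]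
  rcases abs_eq (Real.sqrt_nonneg c) |>.mp h with h1 | h1 <;> simp [h1]

/-- Let W, Z be independent standard normals and Y = Z + W². Then the
partial correlation ρ(Y,W|Z) = 0 while the pGMC r²(Y,W|Z) = 1. Here σ(Z) and
σ(X) = σ(Z,W) are the comap σ-algebras. -/
theorem stmt19 {Ω : Type*} {mΩ : MeasurableSpace Ω} {μ : Measure Ω} [IsProbabilityMeasure μ]
    (W Z : Ω → ℝ) (hWmeas : Measurable W) (hZmeas : Measurable Z)
    (hindep : IndepFun W Z μ)
    (hWlaw : μ.map W = gaussianReal 0 1) (hZlaw : μ.map Z = gaussianReal 0 1)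
    (Y : Ω → ℝ) (hYdef : Y = fun ω => Z ω + W ω ^ 2)
    (mZ mX : MeasurableSpace Ω)
    (hmZ : mZ = MeasurableSpace.comap Z (borel ℝ))
    (hmX : mX = MeasurableSpace.comap (fun ω => (Z ω, W ω)) (borel (ℝ × ℝ)))
    (ρ : ℝ)
    (hρ : ρ = (∫ ω, (Y ω - (μ[Y|mZ]) ω) * (W ω - (μ[W|mZ]) ω) ∂μ)
        / (Real.sqrt (∫ ω, (Y ω - (μ[Y|mZ]) ω) ^ 2 ∂μ)
            * Real.sqrt (∫ ω, (W ω - (μ[W|mZ]) ω) ^ 2 ∂μ))) :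
    ρ = 0 ∧
    (∫ ω, ((μ[Y|mX]) ω - (μ[Y|mZ]) ω) ^ 2 ∂μ)
        / (∫ ω, (Y ω - (μ[Y|mZ]) ω) ^ 2 ∂μ) = 1 := by
  -- replace `borel` by the instances
  rw [← BorelSpace.measurable_eq (α := ℝ)] at hmZ
  rw [← BorelSpace.measurable_eq (α := ℝ × ℝ)] at hmX
  have hmZle : mZ ≤ mΩ := by rw [hmZ]; exact hZmeas.comap_le
  have hmXle : mX ≤ mΩ := by rw [hmX]; exact (hZmeas.prodMk hWmeas).comap_le
  haveI : SigmaFinite (μ.trim hmZle) := inferInstance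
  haveI : SigmaFinite (μ.trim hmXle) := inferInstance
  -- integrability of powers of W and of Z
  have hiWk : ∀ k : ℕ, Integrable (fun ω => W ω ^ k) μ := by
    intro k
    have h := gauss_pow_integrable k
    rw [← hWlaw] at h
    exact (integrable_map_measure (measurable_id.pow_const k).aestronglyMeasurable
      hWmeas.aemeasurable).mp h
  have hiW : Integrable W μ := by simpa using hiWk 1
  have hiW2 : Integrable (fun ω => W ω ^ 2) μ := hiWk 2
  have hiZ : Integrable Z μ := by
    have h := gauss_pow_integrable 1
    rw [← hZlaw] at h
    have := (integrable_map_measure (measurable_id.pow_const 1).aestronglyMeasurable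
      hZmeas.aemeasurable).mp h
    simpa [Function.comp_def] using this
  -- odd moments of W vanish
  have hmomW : ∀ k : ℕ, Odd k → ∫ ω, W ω ^ k ∂μ = 0 := by
    intro k hk
    rw [← gauss_odd_moment k hk, ← hWlaw]
    exact (integral_map hWmeas.aemeasurable
      (measurable_id.pow_const k).aestronglyMeasurable).symm
  have hW1 : ∫ ω, W ω ∂μ = 0 := by
    have := hmomW 1 ⟨0, by norm_num⟩; simpa using this
  have hW3 : ∫ ω, W ω ^ 3 ∂μ = 0 := hmomW 3 ⟨1, by norm_num⟩
  set c : ℝ := ∫ ω, W ω ^ 2 ∂μ with hc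
  -- conditional expectations
  have hindep' : Indep (MeasurableSpace.comap W inferInstance) mZ μ := by
    rw [hmZ]; exact hindep
  have hWm : Measurable[MeasurableSpace.comap W (inferInstance : MeasurableSpace ℝ)] W :=
    measurable_iff_comap_le.mpr le_rfl
  have hWc : μ[W|mZ] =ᵐ[μ] fun _ => (0 : ℝ) := by
    have h := condExp_indep_eq (μ := μ) hWmeas.comap_le hmZle
      hWm.stronglyMeasurable hindep'
    rw [hW1] at h
    exact h
  have hW2c : μ[(fun ω => W ω ^ 2)|mZ] =ᵐ[μ] fun _ => c := by
    have h := condExp_indep_eq (μ := μ) hWmeas.comap_le hmZle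
      (hWm.pow_const 2).stronglyMeasurable hindep'
    exact h
  have hZc : μ[Z|mZ] = Z := by
    refine condExp_of_stronglyMeasurable hmZle ?_ hiZ
    exact Measurable.stronglyMeasurable (by rw [hmZ]; exact measurable_iff_comap_le.mpr le_rfl)
  have hYc : μ[Y|mZ] =ᵐ[μ] fun ω => Z ω + c := by
    rw [hYdef]
    have hsplit : (fun ω => Z ω + W ω ^ 2) = Z + fun ω => W ω ^ 2 := rfl
    rw [hsplit]
    refine (condExp_add hiZ hiW2 mZ).trans ?_
    filter_upwards [hW2c] with ω h
    simp [hZc, h]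
  have hiY : Integrable Y μ := by rw [hYdef]; exact hiZ.add hiW2
  have hYX : μ[Y|mX] = Y := by
    refine condExp_of_stronglyMeasurable hmXle ?_ hiY
    refine Measurable.stronglyMeasurable ?_
    rw [hYdef, hmX]
    have hpair : Measurable[MeasurableSpace.comap (fun ω => (Z ω, W ω)) inferInstance]
        (fun ω => (Z ω, W ω)) := measurable_iff_comap_le.mpr le_rfl
    exact (measurable_fst.comp hpair).add ((measurable_snd.comp hpair).pow_const 2)
  -- the numerator of ρ vanishes
  have hnum : (∫ ω, (Y ω - (μ[Y|mZ]) ω) * (W ω - (μ[W|mZ]) ω) ∂μ) = 0 := by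
    have heq : (fun ω => (Y ω - (μ[Y|mZ]) ω) * (W ω - (μ[W|mZ]) ω))
        =ᵐ[μ] fun ω => W ω ^ 3 - c * W ω := by
      filter_upwards [hYc, hWc] with ω h1 h2
      rw [h1, h2, hYdef]
      ring
    rw [integral_congr_ae heq, integral_sub (hiWk 3) (hiW.const_mul c),
      integral_const_mul, hW3, hW1]
    ring
  constructor
  · rw [hρ, hnum, zero_div]
  -- second part
  have hA : (∫ ω, (Y ω - (μ[Y|mZ]) ω) ^ 2 ∂μ) = ∫ ω, (W ω ^ 2 - c) ^ 2 ∂μ := by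
    refine integral_congr_ae ?_
    filter_upwards [hYc] with ω h
    rw [h, hYdef]
    ring
  have hB : (∫ ω, ((μ[Y|mX]) ω - (μ[Y|mZ]) ω) ^ 2 ∂μ) = ∫ ω, (W ω ^ 2 - c) ^ 2 ∂μ := by
    refine integral_congr_ae ?_
    filter_upwards [hYc] with ω h
    rw [hYX, h, hYdef]
    ring
  have hint : Integrable (fun ω => (W ω ^ 2 - c) ^ 2) μ := by
    have : Integrable (fun ω => W ω ^ 4 - (2 * c) * W ω ^ 2 + c ^ 2) μ :=
      ((hiWk 4).sub (hiW2.const_mul (2 * c))).add (integrable_const _)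
    refine this.congr ?_
    filter_upwards with ω
    ring
  have hAne : (∫ ω, (W ω ^ 2 - c) ^ 2 ∂μ) ≠ 0 := by
    intro h0
    have hae : (fun ω => (W ω ^ 2 - c) ^ 2) =ᵐ[μ] 0 :=
      (integral_eq_zero_iff_of_nonneg_ae (Filter.Eventually.of_forall fun ω => sq_nonneg _)
        hint).mp h0
    have hmem : ∀ᵐ ω ∂μ, W ω ∈ {x : ℝ | x ^ 2 = c} := by
      filter_upwards [hae] with ω h
      have : W ω ^ 2 - c = 0 := by
        have := sq_eq_zero_iff.mp h
        exact this
      simpa [Set.mem_setOf_eq] using sub_eq_zero.mp this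
    have hT : MeasurableSet {x : ℝ | x ^ 2 = c} :=
      (measurable_id.pow_const 2) (measurableSet_singleton c)
    have h1 : μ (W ⁻¹' {x : ℝ | x ^ 2 = c}) = 1 := by
      have hcompl : μ (W ⁻¹' {x : ℝ | x ^ 2 = c})ᶜ = 0 := by
        rw [← Set.preimage_compl]
        exact hmem
      have := measure_add_measure_compl (μ := μ) (hWmeas hT)
      rw [hcompl, add_zero, measure_univ] at this
      exact this
    have h2 := gauss_sq_eq_null c
    rw [← hWlaw, Measure.map_apply hWmeas hT, h1] at h2
    exact one_ne_zero h2
  rw [hA, hB]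
  exact div_self hAne
end
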